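/- arXiv:1704.04430 — 3 statements merged into one kernel-verified Lean document; each statement's English description precedes it below -/
import Mathlib

section
/- Let $X$ be a locally convex Hausdorff topological vector space and $C$ a nonempty convex compact subset of $X$. Let $\{U_i\}_{i \in I}$ be a nonempty family of nonempty closed subsets of $C$ that is totally ordered by inclusion (a descending chain). Let $T : C \to 2^C$ be an upper semicontinuous multivalued mapping such that $T(x)$ is a nonempty closed convex subset of $X$ for every $x \in C$. Then $T\left(\bigcap_{i \in I} U_i\right) = \bigcap_{i \in I} T(U_i)$, where for a set $A \subseteq C$ we write $T(A) = \bigcup_{x \in A} T(x)$. -/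
/-!
If `y` lies in every `T (U i)`, the sets `{x ∈ U i | y ∈ T x}` form a directed family of
nonempty compact sets; they are closed because upper semicontinuity, tested against the open
set `{y}ᶜ`, makes `{x ∈ C | y ∈ T x}` closed. Their intersection is therefore nonempty, and
any point of it lies in `⋂ i, U i` and has `y` in its image.
-/

open Set

/-- Upper semicontinuity of a multivalued mapping `T` on a set `C`
(with `C` carrying the subspace topology): for each `x ∈ C` and each open `V`
containing `T x`, there is an open neighborhood `U` of `x` such that
`T y ⊆ V` for all `y ∈ U ∩ C`. -/
def USCOn {X Y : Type*} [TopologicalSpace X] [TopologicalSpace Y]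
    (T : X → Set Y) (C : Set X) : Prop :=
  ∀ x ∈ C, ∀ V : Set Y, IsOpen V → T x ⊆ V →
    ∃ U : Set X, IsOpen U ∧ x ∈ U ∧ ∀ y ∈ U ∩ C, T y ⊆ V

/-- The image of a set `A` under a multivalued mapping `T`. -/
def mvImage {X Y : Type*} (T : X → Set Y) (A : Set X) : Set Y :=
  ⋃ x ∈ A, T x

section MultivaluedMaps

variable {X Y : Type*}

theorem mem_mvImage {T : X → Set Y} {A : Set X} {y : Y} :
    y ∈ mvImage T A ↔ ∃ x ∈ A, y ∈ T x := by
  simp only [mvImage, mem_iUnion₂, exists_prop]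

theorem mvImage_mono {T : X → Set Y} {A B : Set X} (h : A ⊆ B) : mvImage T A ⊆ mvImage T B :=
  biUnion_subset_biUnion_left h

theorem USCOn.isClosed_setOf_mem [TopologicalSpace X] [TopologicalSpace Y] [T1Space Y]
    {T : X → Set Y} {C : Set X} (hT : USCOn T C) (hC : IsClosed C) (y : Y) :
    IsClosed {x | x ∈ C ∧ y ∈ T x} := by
  refine isClosed_of_closure_subset fun x hx => ?_
  have hxC : x ∈ C := closure_minimal (fun z hz => hz.1) hC hx
  refine ⟨hxC, by_contra fun hy => ?_⟩
  obtain ⟨V, hVo, hxV, hV⟩ :=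
    hT x hxC {y}ᶜ isOpen_compl_singleton (subset_compl_singleton_iff.2 hy)
  obtain ⟨z, hzV, hzC, hyz⟩ := mem_closure_iff.1 hx V hVo hxV
  exact hV z ⟨hzV, hzC⟩ hyz rfl

theorem mvImage_iInter_of_directed [TopologicalSpace X] {ι : Type*} [Nonempty ι]
    {T : X → Set Y} {C : Set X} {U : ι → Set X} (hdir : Directed (· ⊇ ·) U)
    (hUC : ∀ i, U i ⊆ C) (hUclosed : ∀ i, IsClosed (U i)) (hUcomp : ∀ i, IsCompact (U i))
    (hfiber : ∀ y, IsClosed {x | x ∈ C ∧ y ∈ T x}) :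
    mvImage T (⋂ i, U i) = ⋂ i, mvImage T (U i) := by
  refine (subset_iInter fun i => mvImage_mono (iInter_subset U i)).antisymm fun y hy => ?_
  set F := {x | x ∈ C ∧ y ∈ T x}
  have hne : ∀ i, (U i ∩ F).Nonempty := fun i => by
    obtain ⟨x, hxU, hyx⟩ := mem_mvImage.1 (mem_iInter.1 hy i)
    exact ⟨x, hxU, hUC i hxU, hyx⟩
  have hdirF : Directed (· ⊇ ·) (fun i => U i ∩ F) := fun i j =>
    let ⟨k, hki, hkj⟩ := hdir i j
    ⟨k, inter_subset_inter_left F hki, inter_subset_inter_left F hkj⟩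
  obtain ⟨x, hx⟩ := IsCompact.nonempty_iInter_of_directed_nonempty_isCompact_isClosed _ hdirF
    hne (fun i => (hUcomp i).inter_right (hfiber y)) (fun i => (hUclosed i).inter (hfiber y))
  rw [← iInter_inter] at hx
  exact mem_mvImage.2 ⟨x, hx.1, hx.2.2⟩

end MultivaluedMaps

theorem stmt0_general
    {X : Type*} [TopologicalSpace X]
    [T2Space X]
    (C : Set X) (hCcomp : IsCompact C)
    {I : Type*} [Nonempty I] (U : I → Set X)
    (hUclosed : ∀ i, IsClosed (U i))
    (hUsub : ∀ i, U i ⊆ C)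
    (hchain : ∀ i j, U i ⊆ U j ∨ U j ⊆ U i)
    (T : X → Set X)
    (hTusc : USCOn T C) :
    mvImage T (⋂ i, U i) = ⋂ i, mvImage T (U i) := by
  have hdir : Directed (· ⊇ ·) U := fun i j =>
    (hchain i j).elim (fun h => ⟨i, subset_rfl, h⟩) fun h => ⟨j, h, subset_rfl⟩
  exact mvImage_iInter_of_directed hdir hUsub hUclosed
    (fun i => hCcomp.of_isClosed_subset (hUclosed i) (hUsub i))
    (hTusc.isClosed_setOf_mem hCcomp.isClosed)

/-- **Lemma 2.1.** Let `X` be a locally convex Hausdorff topological vector space and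
`C` a nonempty convex compact subset of `X`. Let `{U i}ᵢ` be a nonempty family of
nonempty closed subsets of `C`, totally ordered by inclusion (a descending chain).
Let `T : C → 2^C` be an upper semicontinuous multivalued mapping such that `T x` is a
nonempty closed convex subset of `X` for every `x ∈ C`. Then
`T (⋂ i, U i) = ⋂ i, T (U i)`. -/
theorem stmt0
    {X : Type*} [AddCommGroup X] [Module ℝ X] [TopologicalSpace X]
    [IsTopologicalAddGroup X] [ContinuousSMul ℝ X]
    [LocallyConvexSpace ℝ X] [T2Space X]
    (C : Set X) (hCne : C.Nonempty) (hCconv : Convex ℝ C) (hCcomp : IsCompact C)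
    {I : Type*} [Nonempty I] (U : I → Set X)
    (hUne : ∀ i, (U i).Nonempty) (hUclosed : ∀ i, IsClosed (U i))
    (hUsub : ∀ i, U i ⊆ C)
    (hchain : ∀ i j, U i ⊆ U j ∨ U j ⊆ U i)
    (T : X → Set X)
    (hTrange : ∀ x ∈ C, T x ⊆ C)
    (hTusc : USCOn T C)
    (hTne : ∀ x ∈ C, (T x).Nonempty)
    (hTclosed : ∀ x ∈ C, IsClosed (T x))
    (hTconv : ∀ x ∈ C, Convex ℝ (T x)) :
    mvImage T (⋂ i, U i) = ⋂ i, mvImage T (U i) :=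
  stmt0_general C hCcomp U hUclosed hUsub hchain T hTusc
end

section
/- Let $X$ be a locally convex Hausdorff topological vector space and $C$ a nonempty convex compact subset of $X$. Let $T : C \to 2^X$ be a convex, upper semicontinuous multivalued mapping such that $T(x)$ is a nonempty compact convex subset of $X$ for all $x \in C$. If $C \subseteq T(C)$ (where $T(C) = \bigcup_{x \in C} T(x)$), then there exists $x_0 \in C$ such that $x_0 \in T(x_0)$, i.e., $T$ has a fixed point in $C$. -/
/-!
If `T` had no fixed point, the displacements `y - x` with `x ∈ C` and `y ∈ T x ∩ C` would form
a compact convex set not containing `0`, so some continuous linear functional `f` would be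
strictly positive on it, i.e. `f` strictly increases along `T` on `C`. But a minimiser of `f` on
the compact set `C` lies in some `T x` with `x ∈ C`, and then `f x < f x₀ ≤ f x`.
-/

open Set

/-- A multivalued mapping `T` defined on a set `C` in a real vector space is convex if
`λ t + (1-λ) z ∈ T (λ x + (1-λ) y)` for all `t ∈ T x`, `z ∈ T y`, `λ ∈ (0,1)`. -/
def MVConvexOn {X : Type*} [AddCommGroup X] [Module ℝ X]
    (T : X → Set X) (C : Set X) : Prop :=
  ∀ x ∈ C, ∀ y ∈ C, ∀ t ∈ T x, ∀ z ∈ T y, ∀ l : ℝ, l ∈ Set.Ioo (0:ℝ) 1 →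
    l • t + (1 - l) • z ∈ T (l • x + (1 - l) • y)

section Graph

variable {X Y : Type*}

def mvGraph (T : X → Set Y) (C : Set X) : Set (X × Y) :=
  {p | p.1 ∈ C ∧ p.2 ∈ T p.1}

theorem USCOn.isClosed_mvGraph [TopologicalSpace X] [TopologicalSpace Y] [T2Space Y]
    {T : X → Set Y} {C : Set X} (hT : USCOn T C) (hC : IsClosed C)
    (hTcomp : ∀ x ∈ C, IsCompact (T x)) : IsClosed (mvGraph T C) := by
  rw [← isOpen_compl_iff, isOpen_iff_forall_mem_open]
  rintro ⟨x, y⟩ hxy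
  by_cases hx : x ∈ C
  · have hy : y ∉ T x := fun hy => hxy ⟨hx, hy⟩
    obtain ⟨U, V, hU, hV, hTU, hyV, hUV⟩ :=
      SeparatedNhds.of_isCompact_isCompact (hTcomp x hx) isCompact_singleton
        (disjoint_singleton_right.mpr hy)
    obtain ⟨W, hW, hxW, hWU⟩ := hT x hx U hU hTU
    refine ⟨W ×ˢ V, ?_, hW.prod hV, hxW, hyV rfl⟩
    rintro q ⟨hqW, hqV⟩ ⟨hqC, hqT⟩
    exact hUV.le_bot ⟨hWU q.1 ⟨hqW, hqC⟩ hqT, hqV⟩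
  · exact ⟨Cᶜ ×ˢ univ, fun q hq hqG => hq.1 hqG.1, hC.isOpen_compl.prod isOpen_univ, hx,
      trivial⟩

theorem MVConvexOn.convex_mvGraph [AddCommGroup X] [Module ℝ X] {T : X → Set X} {C : Set X}
    (hT : MVConvexOn T C) (hC : Convex ℝ C) : Convex ℝ (mvGraph T C) := by
  rw [convex_iff_openSegment_subset]
  rintro p ⟨hp₁, hp₂⟩ q ⟨hq₁, hq₂⟩ _ ⟨a, b, ha, hb, hab, rfl⟩
  obtain rfl : b = 1 - a := by linarith
  exact ⟨hC.openSegment_subset hp₁ hq₁ ⟨a, 1 - a, ha, hb, hab, rfl⟩,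
    hT p.1 hp₁ q.1 hq₁ p.2 hp₂ q.2 hq₂ a ⟨ha, by linarith⟩⟩

end Graph

theorem exists_clm_lt_of_forall_notMem_self
    {X : Type*} [AddCommGroup X] [Module ℝ X] [TopologicalSpace X]
    [IsTopologicalAddGroup X] [ContinuousSMul ℝ X] [LocallyConvexSpace ℝ X] [T2Space X]
    {C : Set X} (hCconv : Convex ℝ C) (hCcomp : IsCompact C) {T : X → Set X}
    (hTconvmap : MVConvexOn T C) (hTusc : USCOn T C) (hTcomp : ∀ x ∈ C, IsCompact (T x))
    (hfix : ∀ x ∈ C, x ∉ T x) :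
    ∃ f : X →L[ℝ] ℝ, ∀ x ∈ C, ∀ y ∈ T x, y ∈ C → f x < f y := by
  set K := mvGraph T C ∩ C ×ˢ C
  have hKcomp : IsCompact K :=
    (hCcomp.prod hCcomp).inter_left (hTusc.isClosed_mvGraph hCcomp.isClosed hTcomp)
  have hKconv : Convex ℝ K := (hTconvmap.convex_mvGraph hCconv).inter (hCconv.prod hCconv)
  set δ : X × X →L[ℝ] X := ContinuousLinearMap.snd ℝ X X - ContinuousLinearMap.fst ℝ X X
  have h0 : (0 : X) ∉ δ '' K := by
    rintro ⟨p, ⟨⟨hp₁, hp₂⟩, -⟩, hp⟩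
    rw [show p.2 = p.1 from sub_eq_zero.mp hp] at hp₂
    exact hfix p.1 hp₁ hp₂
  obtain ⟨f, u, hf0, hfK⟩ := geometric_hahn_banach_point_closed
    (hKconv.linear_image (δ : X × X →ₗ[ℝ] X)) (hKcomp.image δ.continuous).isClosed h0
  refine ⟨f, fun x hx y hy hyC => ?_⟩
  have := hfK (y - x) ⟨(x, y), ⟨⟨hx, hy⟩, hx, hyC⟩, rfl⟩
  rw [map_zero] at hf0
  rw [map_sub] at this
  linarith

theorem stmt1_general
    {X : Type*} [AddCommGroup X] [Module ℝ X] [TopologicalSpace X]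
    [IsTopologicalAddGroup X] [ContinuousSMul ℝ X]
    [LocallyConvexSpace ℝ X] [T2Space X]
    (C : Set X) (hCne : C.Nonempty) (hCconv : Convex ℝ C) (hCcomp : IsCompact C)
    (T : X → Set X)
    (hTconvmap : MVConvexOn T C)
    (hTusc : USCOn T C)
    (hTcomp : ∀ x ∈ C, IsCompact (T x))
    (hCT : C ⊆ mvImage T C) :
    ∃ x₀ ∈ C, x₀ ∈ T x₀ := by
  by_contra! hfix
  obtain ⟨f, hf⟩ :=
    exists_clm_lt_of_forall_notMem_self hCconv hCcomp hTconvmap hTusc hTcomp hfix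
  obtain ⟨x₀, hx₀, hmin⟩ := hCcomp.exists_isMinOn hCne f.continuous.continuousOn
  obtain ⟨x, hx, hx₀T⟩ := mem_iUnion₂.mp (hCT hx₀)
  exact (hf x hx x₀ hx₀T hx₀).not_ge (hmin hx)

/-- **Theorem 2.2.** Let `X` be a locally convex Hausdorff topological vector space and
`C` a nonempty convex compact subset of `X`. Let `T : C → 2^X` be a convex, upper
semicontinuous multivalued mapping such that `T x` is a nonempty compact convex subset
of `X` for all `x ∈ C`. If `C ⊆ T(C)`, then there exists `x₀ ∈ C` with `x₀ ∈ T x₀`. -/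
theorem stmt1
    {X : Type*} [AddCommGroup X] [Module ℝ X] [TopologicalSpace X]
    [IsTopologicalAddGroup X] [ContinuousSMul ℝ X]
    [LocallyConvexSpace ℝ X] [T2Space X]
    (C : Set X) (hCne : C.Nonempty) (hCconv : Convex ℝ C) (hCcomp : IsCompact C)
    (T : X → Set X)
    (hTconvmap : MVConvexOn T C)
    (hTusc : USCOn T C)
    (hTne : ∀ x ∈ C, (T x).Nonempty)
    (hTcomp : ∀ x ∈ C, IsCompact (T x))
    (hTconv : ∀ x ∈ C, Convex ℝ (T x))
    (hCT : C ⊆ mvImage T C) :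
    ∃ x₀ ∈ C, x₀ ∈ T x₀ :=
  stmt1_general C hCne hCconv hCcomp T hTconvmap hTusc hTcomp hCT
end

section
/- Let $X$ be a locally convex Hausdorff topological vector space, $C$ a nonempty convex compact subset of $X$, and $T : C \to 2^X$ a convex, upper semicontinuous multivalued mapping (whose values $T(x)$ are allowed to be empty). Then the set $D = \{x \in C : T(x) \neq \emptyset\}$ is a convex and closed (hence compact) subset of $C$. Moreover, if $C \subseteq T(C)$, then $D \subseteq T(D)$, where $T(A) = \bigcup_{x \in A} T(x)$. -/
open Set

theorem MVConvexOn.convex_setOf_nonempty {X : Type*} [AddCommGroup X] [Module ℝ X]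
    {T : X → Set X} {C : Set X} (hT : MVConvexOn T C) (hC : Convex ℝ C) :
    Convex ℝ {x ∈ C | (T x).Nonempty} := by
  rw [convex_iff_forall_pos]
  rintro x ⟨hxC, t, ht⟩ y ⟨hyC, z, hz⟩ a b ha hb hab
  obtain rfl : b = 1 - a := by linarith
  exact ⟨hC hxC hyC ha.le hb.le hab, _, hT x hxC y hyC t ht z hz a ⟨ha, by linarith⟩⟩

theorem USCOn.isClosed_setOf_nonempty {X Y : Type*} [TopologicalSpace X] [TopologicalSpace Y]
    {T : X → Set Y} {C : Set X} (hT : USCOn T C) (hC : IsClosed C) :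
    IsClosed {x ∈ C | (T x).Nonempty} := by
  refine isClosed_of_closure_subset fun x hx => ?_
  have hxC : x ∈ C := hC.closure_subset (closure_mono (sep_subset _ _) hx)
  refine ⟨hxC, nonempty_iff_ne_empty.2 fun hTx => ?_⟩
  -- upper semicontinuity at `x` with `V = ∅` yields a neighbourhood of `x` on which `T` is empty
  obtain ⟨U, hUo, hxU, hU⟩ := hT x hxC ∅ isOpen_empty hTx.subset
  obtain ⟨y, hyU, hyC, t, ht⟩ := mem_closure_iff.1 hx U hUo hxU
  exact hU y ⟨hyU, hyC⟩ ht

theorem mvImage_setOf_nonempty {X Y : Type*} (T : X → Set Y) (A : Set X) :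
    mvImage T {x ∈ A | (T x).Nonempty} = mvImage T A := by
  refine Subset.antisymm (biUnion_mono (sep_subset _ _) fun _ _ => Subset.rfl) ?_
  simp only [mvImage, iUnion_subset_iff]
  exact fun x hx t ht => mem_biUnion ⟨hx, t, ht⟩ ht

theorem stmt4_general
    {X : Type*} [AddCommGroup X] [Module ℝ X] [TopologicalSpace X]
    [T2Space X]
    (C : Set X) (hCconv : Convex ℝ C) (hCcomp : IsCompact C)
    (T : X → Set X)
    (hTconvmap : MVConvexOn T C)
    (hTusc : USCOn T C) :
    Convex ℝ {x ∈ C | (T x).Nonempty} ∧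
    IsClosed {x ∈ C | (T x).Nonempty} ∧
    IsCompact {x ∈ C | (T x).Nonempty} ∧
    {x ∈ C | (T x).Nonempty} ⊆ C ∧
    (C ⊆ mvImage T C →
      {x ∈ C | (T x).Nonempty} ⊆ mvImage T {x ∈ C | (T x).Nonempty}) := by
  have hsub : {x ∈ C | (T x).Nonempty} ⊆ C := sep_subset _ _
  have hclosed := hTusc.isClosed_setOf_nonempty hCcomp.isClosed
  refine ⟨hTconvmap.convex_setOf_nonempty hCconv, hclosed,
    hCcomp.of_isClosed_subset hclosed hsub, hsub, fun hCT => ?_⟩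
  rw [mvImage_setOf_nonempty]
  exact hsub.trans hCT

/-- **Remark after Theorem 2.2.** Let `X` be a locally convex Hausdorff topological
vector space, `C` a nonempty convex compact subset, and `T : C → 2^X` a convex, upper
semicontinuous multivalued mapping whose values may be empty. Then
`D = {x ∈ C : T x ≠ ∅}` is a convex, closed (hence compact) subset of `C`; moreover,
if `C ⊆ T(C)` then `D ⊆ T(D)`. -/
theorem stmt4
    {X : Type*} [AddCommGroup X] [Module ℝ X] [TopologicalSpace X]
    [IsTopologicalAddGroup X] [ContinuousSMul ℝ X]
    [LocallyConvexSpace ℝ X] [T2Space X]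
    (C : Set X) (hCne : C.Nonempty) (hCconv : Convex ℝ C) (hCcomp : IsCompact C)
    (T : X → Set X)
    (hTconvmap : MVConvexOn T C)
    (hTusc : USCOn T C) :
    Convex ℝ {x ∈ C | (T x).Nonempty} ∧
    IsClosed {x ∈ C | (T x).Nonempty} ∧
    IsCompact {x ∈ C | (T x).Nonempty} ∧
    {x ∈ C | (T x).Nonempty} ⊆ C ∧
    (C ⊆ mvImage T C →
      {x ∈ C | (T x).Nonempty} ⊆ mvImage T {x ∈ C | (T x).Nonempty}) :=
  stmt4_general C hCconv hCcomp T hTconvmap hTusc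
end
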